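/- Assume (D1). Then for every ζ ∈ ℝ^d, M_n(ζ) ≥ (ζᵀAζ)² / ( 4 ζᵀAζ + (2/√n) ‖ζ‖₂ · ζᵀBζ ), where A := (1/n)Σ_{i=1}^n Dh(X_i)Σ Dh(X_i)ᵀ and B := (1/n)Σ_{i=1}^n κ₁(X_i) Dh(X_i)Σ² Dh(X_i)ᵀ, with the convention that the right-hand side equals 0 when ζᵀAζ = 0. -/

import Mathlib

open MeasureTheory Matrix Filter ProbabilityTheory
open scoped BigOperators ENNReal NNReal Topology

noncomputable section

/-- The Euclidean norm `‖v‖₂` of a vector `v ∈ ℝ^k`. -/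
def enorm2 {k : ℕ} (v : Fin k → ℝ) : ℝ := Real.sqrt (∑ i, v i ^ 2)

/-- The operator norm `‖A‖₂` of a matrix with respect to Euclidean norms. -/
def opNorm2 {a b : ℕ} (A : Matrix (Fin a) (Fin b) ℝ) : ℝ :=
  sSup {r : ℝ | ∃ v : Fin b → ℝ, enorm2 v = 1 ∧ r = enorm2 (A.mulVec v)}

/-- The smallest eigenvalue `σ_min(A)` of a symmetric matrix, realized as the minimum of the
quadratic form over the unit sphere. -/
def sigmaMin {k : ℕ} (A : Matrix (Fin k) (Fin k) ℝ) : ℝ :=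
  sInf {r : ℝ | ∃ v : Fin k → ℝ, enorm2 v = 1 ∧ r = v ⬝ᵥ A.mulVec v}

/-- The squared Mahalanobis norm `‖v‖_Σ² = vᵀ Σ⁻¹ v`. -/
def mahal {m : ℕ} (S : Matrix (Fin m) (Fin m) ℝ) (v : Fin m → ℝ) : ℝ :=
  v ⬝ᵥ (S⁻¹).mulVec v

/-- The Jacobian matrix `Dh(x) ∈ ℝ^{d×m}` of `h : ℝ^m → ℝ^d` at `x`. -/
def jac {m d : ℕ} (h : (Fin m → ℝ) → (Fin d → ℝ)) (x : Fin m → ℝ) : Matrix (Fin d) (Fin m) ℝ :=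
  Matrix.of fun β γ => fderiv ℝ h x (Pi.single γ 1) β

/-- The Hessian matrix `D²h^β(x) ∈ ℝ^{m×m}` of the `β`-th component of `h` at `x`. -/
def hess {m d : ℕ} (h : (Fin m → ℝ) → (Fin d → ℝ)) (β : Fin d) (x : Fin m → ℝ) :
    Matrix (Fin m) (Fin m) ℝ :=
  Matrix.of fun i j =>
    fderiv ℝ (fun y => fderiv ℝ (fun z => h z β) y (Pi.single j 1)) x (Pi.single i 1)

/-- Assumption (CH): `0` lies in the interior of the convex hull of the range of `h`. -/
def AssumptionCH {m d : ℕ} (h : (Fin m → ℝ) → Fin d → ℝ) : Prop :=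
  (0 : Fin d → ℝ) ∈ interior (convexHull ℝ (Set.range h))

/-- Assumption (D1): `h ∈ C³` and the Jacobian is Lipschitz with modulus `κ₁`. -/
def AssumptionD1 {m d : ℕ} (h : (Fin m → ℝ) → Fin d → ℝ) (κ₁ : (Fin m → ℝ) → ℝ) : Prop :=
  ContDiff ℝ 3 h ∧ (∀ x, 0 ≤ κ₁ x) ∧
    ∀ (x Δ : Fin m → ℝ) (ζ : Fin d → ℝ),
      enorm2 (fun γ => ∑ β, ζ β * (jac h (x + Δ) β γ - jac h x β γ)) ≤
        κ₁ x * enorm2 Δ * enorm2 ζ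

/-- Assumption (D2): the Hessians are locally Lipschitz with modulus `κ₂` at scale `δ̂`. -/
def AssumptionD2 {m d : ℕ} (h : (Fin m → ℝ) → Fin d → ℝ) (κ₂ : (Fin m → ℝ) → ℝ)
    (δhat : ℝ) : Prop :=
  0 < δhat ∧ (∀ x, 0 ≤ κ₂ x) ∧
    ∀ (x Δ : Fin m → ℝ) (ζ : Fin d → ℝ), enorm2 Δ ≤ δhat →
      opNorm2 (∑ β, ζ β • (hess h β (x + Δ) - hess h β x)) ≤ κ₂ x * enorm2 Δ * enorm2 ζ

/-- Optimal transport cost with ground cost `c(x̄,x) = ‖x̄ - x‖_Σ²`. -/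
def otCost {m : ℕ} (S : Matrix (Fin m) (Fin m) ℝ) (Q P : Measure (Fin m → ℝ)) : ℝ≥0∞ :=
  ⨅ (π : Measure ((Fin m → ℝ) × (Fin m → ℝ))) (_ : IsProbabilityMeasure π)
    (_ : π.map Prod.fst = Q) (_ : π.map Prod.snd = P),
    ∫⁻ p, ENNReal.ofReal (mahal S (p.1 - p.2)) ∂π

/-- The empirical measure of the sample `X₁, …, X_n`. -/
def empMeas {m n : ℕ} (X : Fin n → Fin m → ℝ) : Measure (Fin m → ℝ) :=
  (n : ℝ≥0∞)⁻¹ • ∑ i, Measure.dirac (X i)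

/-- The Wasserstein projection value `R_n(h)`. -/
def Rn {m d n : ℕ} (S : Matrix (Fin m) (Fin m) ℝ) (h : (Fin m → ℝ) → Fin d → ℝ)
    (X : Fin n → Fin m → ℝ) : ℝ≥0∞ :=
  ⨅ (P : Measure (Fin m → ℝ)) (_ : IsProbabilityMeasure P) (_ : Integrable h P)
    (_ : (∫ x, h x ∂P) = 0), otCost S (empMeas X) P

/-- The inner objective `ζᵀ ∫₀¹ Dh(Xᵢ + n^{-1/2}Δu)Δ du − ‖Δ‖_Σ²`. -/
def innerObj {m d : ℕ} (S : Matrix (Fin m) (Fin m) ℝ) (h : (Fin m → ℝ) → Fin d → ℝ)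
    (n : ℕ) (Xi : Fin m → ℝ) (ζ : Fin d → ℝ) (Δ : Fin m → ℝ) : ℝ :=
  (∫ u in (0:ℝ)..1, ζ ⬝ᵥ (jac h (Xi + ((Real.sqrt n)⁻¹ * u) • Δ)).mulVec Δ) - mahal S Δ

/-- The dual function `M_n(ζ)`, with values in `[0,∞]`. -/
def Mn {m d n : ℕ} (S : Matrix (Fin m) (Fin m) ℝ) (h : (Fin m → ℝ) → Fin d → ℝ)
    (X : Fin n → Fin m → ℝ) (ζ : Fin d → ℝ) : ℝ≥0∞ :=
  (n : ℝ≥0∞)⁻¹ * ∑ i, ⨆ Δ : Fin m → ℝ, ENNReal.ofReal (innerObj S h n (X i) ζ Δ)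

/-- `H_n = n^{-1/2} ∑ᵢ h(Xᵢ)`. -/
def Hn {m d n : ℕ} (h : (Fin m → ℝ) → Fin d → ℝ) (X : Fin n → Fin m → ℝ) : Fin d → ℝ :=
  (Real.sqrt n)⁻¹ • ∑ i, h (X i)

/-- `𝒱_n = n⁻¹ ∑ᵢ Dh(Xᵢ) Σ Dh(Xᵢ)ᵀ`. -/
def Vn {m d n : ℕ} (S : Matrix (Fin m) (Fin m) ℝ) (h : (Fin m → ℝ) → Fin d → ℝ)
    (X : Fin n → Fin m → ℝ) : Matrix (Fin d) (Fin d) ℝ :=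
  (n : ℝ)⁻¹ • ∑ i, jac h (X i) * S * (jac h (X i))ᵀ

/-- `𝒲_n = n⁻¹ ∑ᵢ h(Xᵢ) h(Xᵢ)ᵀ`. -/
def Wn {m d n : ℕ} (h : (Fin m → ℝ) → Fin d → ℝ) (X : Fin n → Fin m → ℝ) :
    Matrix (Fin d) (Fin d) ℝ :=
  (n : ℝ)⁻¹ • ∑ i, Matrix.vecMulVec (h (X i)) (h (X i))

/-- Entry of the tensor `Dh^β(x) Σ D²h^γ(x) Σ Dh^ω(x)ᵀ`. -/
def KnE {m d : ℕ} (S : Matrix (Fin m) (Fin m) ℝ) (h : (Fin m → ℝ) → Fin d → ℝ)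
    (x : Fin m → ℝ) (β γ ω : Fin d) : ℝ :=
  jac h x β ⬝ᵥ S.mulVec ((hess h γ x).mulVec (S.mulVec (jac h x ω)))

/-- The tensor `𝒦_n`. -/
def Kn {m d n : ℕ} (S : Matrix (Fin m) (Fin m) ℝ) (h : (Fin m → ℝ) → Fin d → ℝ)
    (X : Fin n → Fin m → ℝ) (β γ ω : Fin d) : ℝ :=
  (n : ℝ)⁻¹ * ∑ i, KnE S h (X i) β γ ω

/-- `ξ_n = 𝒱_n⁻¹ H_n`. -/
def xin {m d n : ℕ} (S : Matrix (Fin m) (Fin m) ℝ) (h : (Fin m → ℝ) → Fin d → ℝ)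
    (X : Fin n → Fin m → ℝ) : Fin d → ℝ :=
  ((Vn S h X)⁻¹).mulVec (Hn h X)

/-- The quadratic term `⟨𝒱_n, ξ_n^{⊗2}⟩`. -/
def quadTerm {m d n : ℕ} (S : Matrix (Fin m) (Fin m) ℝ) (h : (Fin m → ℝ) → Fin d → ℝ)
    (X : Fin n → Fin m → ℝ) : ℝ :=
  xin S h X ⬝ᵥ (Vn S h X).mulVec (xin S h X)

/-- The cubic term `⟨𝒦_n, ξ_n^{⊗3}⟩`. -/
def cubTerm {m d n : ℕ} (S : Matrix (Fin m) (Fin m) ℝ) (h : (Fin m → ℝ) → Fin d → ℝ)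
    (X : Fin n → Fin m → ℝ) : ℝ :=
  ∑ β, ∑ γ, ∑ ω, Kn S h X β γ ω * xin S h X β * xin S h X γ * xin S h X ω

/-- The cubic form `L_n(ζ)`. -/
def Ln {m d n : ℕ} (S : Matrix (Fin m) (Fin m) ℝ) (h : (Fin m → ℝ) → Fin d → ℝ)
    (X : Fin n → Fin m → ℝ) (ζ : Fin d → ℝ) : ℝ :=
  (1/8) * ∑ β, ∑ γ, ∑ ω, ζ β * ζ γ * ζ ω * Kn S h X β γ ω

/-- `F_n(ζ) = ¼ ζᵀ𝒱_nζ + n^{-1/2} L_n(ζ)`. -/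
def Fn {m d n : ℕ} (S : Matrix (Fin m) (Fin m) ℝ) (h : (Fin m → ℝ) → Fin d → ℝ)
    (X : Fin n → Fin m → ℝ) (ζ : Fin d → ℝ) : ℝ :=
  (1/4) * (ζ ⬝ᵥ (Vn S h X).mulVec ζ) + (Real.sqrt n)⁻¹ * Ln S h X ζ

/-- The gradient `∇L_n(ζ)`. -/
def gradLn {m d n : ℕ} (S : Matrix (Fin m) (Fin m) ℝ) (h : (Fin m → ℝ) → Fin d → ℝ)
    (X : Fin n → Fin m → ℝ) (ζ : Fin d → ℝ) : Fin d → ℝ :=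
  fun β => fderiv ℝ (Ln S h X) ζ (Pi.single β 1)

/-- The population matrix `V = E[Dh(X) Σ Dh(X)ᵀ]`. -/
def VP {m d : ℕ} (S : Matrix (Fin m) (Fin m) ℝ) (h : (Fin m → ℝ) → Fin d → ℝ)
    (P : Measure (Fin m → ℝ)) : Matrix (Fin d) (Fin d) ℝ :=
  Matrix.of fun β γ => ∫ x, (jac h x * S * (jac h x)ᵀ) β γ ∂P

/-- The population matrix `W = E[h(X) h(X)ᵀ]`. -/
def WP {m d : ℕ} (h : (Fin m → ℝ) → Fin d → ℝ) (P : Measure (Fin m → ℝ)) :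
    Matrix (Fin d) (Fin d) ℝ :=
  Matrix.of fun β γ => ∫ x, h x β * h x γ ∂P

/-- `E[‖Dh(X)‖₂² κ₁(X)]`. -/
def momA {m d : ℕ} (h : (Fin m → ℝ) → Fin d → ℝ) (κ₁ : (Fin m → ℝ) → ℝ)
    (P : Measure (Fin m → ℝ)) : ℝ := ∫ x, opNorm2 (jac h x) ^ 2 * κ₁ x ∂P

/-- `E[‖Dh(X)‖₂² κ₁(X)²]`. -/
def momB {m d : ℕ} (h : (Fin m → ℝ) → Fin d → ℝ) (κ₁ : (Fin m → ℝ) → ℝ)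
    (P : Measure (Fin m → ℝ)) : ℝ := ∫ x, opNorm2 (jac h x) ^ 2 * κ₁ x ^ 2 ∂P

/-- `E[‖Dh(X)‖₂³ κ₂(X)]`. -/
def momC {m d : ℕ} (h : (Fin m → ℝ) → Fin d → ℝ) (κ₂ : (Fin m → ℝ) → ℝ)
    (P : Measure (Fin m → ℝ)) : ℝ := ∫ x, opNorm2 (jac h x) ^ 3 * κ₂ x ∂P

/-- `E[‖Dh(X)‖₂³ κ₁(X) κ₂(X)]`. -/
def momD {m d : ℕ} (h : (Fin m → ℝ) → Fin d → ℝ) (κ₁ κ₂ : (Fin m → ℝ) → ℝ)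
    (P : Measure (Fin m → ℝ)) : ℝ := ∫ x, opNorm2 (jac h x) ^ 3 * κ₁ x * κ₂ x ∂P

/-- `E[‖Dh(X)‖₂² κ₁(X)³]`. -/
def momE {m d : ℕ} (h : (Fin m → ℝ) → Fin d → ℝ) (κ₁ : (Fin m → ℝ) → ℝ)
    (P : Measure (Fin m → ℝ)) : ℝ := ∫ x, opNorm2 (jac h x) ^ 2 * κ₁ x ^ 3 ∂P

/-- `E[‖Dh(X)‖₂³ κ₁(X)² κ₂(X)]`. -/
def momF {m d : ℕ} (h : (Fin m → ℝ) → Fin d → ℝ) (κ₁ κ₂ : (Fin m → ℝ) → ℝ)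
    (P : Measure (Fin m → ℝ)) : ℝ := ∫ x, opNorm2 (jac h x) ^ 3 * κ₁ x ^ 2 * κ₂ x ∂P

/-- Condition A on the sample. -/
def CondA {m d n : ℕ} (S : Matrix (Fin m) (Fin m) ℝ) (h : (Fin m → ℝ) → Fin d → ℝ)
    (κ₁ κ₂ : (Fin m → ℝ) → ℝ) (P : Measure (Fin m → ℝ)) (X : Fin n → Fin m → ℝ) : Prop :=
  (2⁻¹ * sigmaMin (VP S h P) ≤ sigmaMin (Vn S h X)) ∧
  (enorm2 (Hn h X) ≤ 2 * Real.sqrt (Real.log n)) ∧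
  (∀ i, opNorm2 (jac h (X i)) ≤ (n : ℝ) ^ ((1 : ℝ)/4)) ∧
  (∀ i, κ₁ (X i) ≤ (n : ℝ) ^ ((1 : ℝ)/4)) ∧
  (|(n : ℝ)⁻¹ * ∑ i, opNorm2 (jac h (X i)) ^ 2 * κ₁ (X i)| ≤ 1 + momA h κ₁ P) ∧
  (|(n : ℝ)⁻¹ * ∑ i, opNorm2 (jac h (X i)) ^ 2 * κ₁ (X i) ^ 2| ≤ 1 + momB h κ₁ P) ∧
  (|(n : ℝ)⁻¹ * ∑ i, opNorm2 (jac h (X i)) ^ 3 * κ₂ (X i)| ≤ 1 + momC h κ₂ P) ∧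
  (|(n : ℝ)⁻¹ * ∑ i, opNorm2 (jac h (X i)) ^ 3 * κ₁ (X i) * κ₂ (X i)|
      ≤ Real.sqrt n + momD h κ₁ κ₂ P) ∧
  (|(n : ℝ)⁻¹ * ∑ i, opNorm2 (jac h (X i)) ^ 2 * κ₁ (X i) ^ 3| ≤ Real.sqrt n + momE h κ₁ P) ∧
  (|(n : ℝ)⁻¹ * ∑ i, opNorm2 (jac h (X i)) ^ 3 * κ₁ (X i) ^ 2 * κ₂ (X i)|
      ≤ (n : ℝ) + momF h κ₁ κ₂ P)

open Classical in
/-- The principal square root of a positive semidefinite matrix (junk value `0` otherwise). -/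
def matSqrt {k : ℕ} (A : Matrix (Fin k) (Fin k) ℝ) : Matrix (Fin k) (Fin k) ℝ :=
  if hA : A.PosSemidef then
    hA.1.eigenvectorUnitary.1 * Matrix.diagonal (fun i => Real.sqrt (hA.1.eigenvalues i)) *
      (star hA.1.eigenvectorUnitary : Matrix (Fin k) (Fin k) ℝ)
  else 0

/-- The standard Gaussian density on `ℝ^d`. -/
def gaussDensity (d : ℕ) (v : Fin d → ℝ) : ℝ :=
  (2 * Real.pi) ^ (-(d : ℝ)/2) * Real.exp (-(∑ i, v i ^ 2)/2)

/-- `F_{W,V}(z) = ∫_{vᵀW^{1/2}V⁻¹W^{1/2}v ≤ z} φ(v) dv`. -/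
def FWV {d : ℕ} (W V : Matrix (Fin d) (Fin d) ℝ) (z : ℝ) : ℝ :=
  ∫ v in {v : Fin d → ℝ | v ⬝ᵥ (matSqrt W * V⁻¹ * matSqrt W).mulVec v ≤ z}, gaussDensity d v

/-- The `(1-α)`-quantile `z_{W,V} = F_{W,V}⁻¹(1-α)`. -/
def zQuantile {d : ℕ} (α : ℝ) (W V : Matrix (Fin d) (Fin d) ℝ) : ℝ :=
  sInf {z : ℝ | 0 < z ∧ 1 - α ≤ FWV W V z}

/-- The Frobenius inner product of two square matrices. -/
def frob {k : ℕ} (A B : Matrix (Fin k) (Fin k) ℝ) : ℝ := ∑ i, ∑ j, A i j * B i j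

/-- The matrix exponential (defined entrywise by the exponential series). -/
def matExp {k : ℕ} (A : Matrix (Fin k) (Fin k) ℝ) : Matrix (Fin k) (Fin k) ℝ :=
  Matrix.of fun i j => ∑' t : ℕ, (t.factorial : ℝ)⁻¹ * (A ^ t) i j

/-- The matrix `L_{W,V}`. -/
def LWV {d : ℕ} (α : ℝ) (W V : Matrix (Fin d) (Fin d) ℝ) : Matrix (Fin d) (Fin d) ℝ :=
  Matrix.of fun j k =>
    ∫ v in {v : Fin d → ℝ | ∑ i, v i ^ 2 ≤ zQuantile α W V},
      (2 * Real.pi) ^ (-(d : ℝ)/2) *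
        Real.exp (-(v ⬝ᵥ (matSqrt V * W⁻¹ * matSqrt V).mulVec v)/2) *
        Real.sqrt (matSqrt V * W⁻¹ * matSqrt V).det *
        (-(1/2) * (v j * v k) + (1/2) * ((matSqrt V)⁻¹ * W * (matSqrt V)⁻¹) j k)

/-- The differential `d(V^{1/2} W⁻¹ V^{1/2})` in the directions `(dW, dV)`. -/
def PhiDiff {d : ℕ} (W V dW dV : Matrix (Fin d) (Fin d) ℝ) : Matrix (Fin d) (Fin d) ℝ :=
  (Matrix.of fun i j => ∫ s in Set.Ioi (0:ℝ),
      (matExp (-(s • matSqrt V)) * dV * matExp (-(s • matSqrt V))) i j) * W⁻¹ * matSqrt V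
  - matSqrt V * W⁻¹ * dW * W⁻¹ * matSqrt V
  + matSqrt V * W⁻¹ *
    (Matrix.of fun i j => ∫ s in Set.Ioi (0:ℝ),
      (matExp (-(s • matSqrt V)) * dV * matExp (-(s • matSqrt V))) i j)

/-- The linear functional `𝓛_{W,V}(dW, dV)`. -/
def calL {d : ℕ} (α : ℝ) (W V dW dV : Matrix (Fin d) (Fin d) ℝ) : ℝ :=
  frob (LWV α W V) (PhiDiff W V dW dV) / frob (LWV α W V) (matSqrt V * W⁻¹ * matSqrt V)

/-- The total variation distance between two measures. -/
def tvDist {α : Type*} [MeasurableSpace α] (P Q : Measure α) : ℝ :=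
  sSup {r : ℝ | ∃ s : Set α, MeasurableSet s ∧ r = |(P s).toReal - (Q s).toReal|}

/-- `sup_{‖t‖₂ ≥ b} |∫ exp(i tᵀ y) dP(y)|`. -/
def charAbsSup {d : ℕ} (P : Measure (Fin d → ℝ)) (b : ℝ) : ℝ :=
  sSup {r : ℝ | ∃ t : Fin d → ℝ, b ≤ enorm2 t ∧
    r = ‖∫ y, Complex.exp (Complex.I * ((t ⬝ᵥ y : ℝ) : ℂ)) ∂P‖}

/-- Cramér's condition for a measure on `ℝ^d`. -/
def CramerCond {d : ℕ} (P : Measure (Fin d → ℝ)) : Prop :=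
  ∀ b : ℝ, 0 < b → charAbsSup P b < 1

/-- Entrywise mean `E[A]` of a matrix-valued law. -/
def matMean {k : ℕ} (ν : Measure (Fin k → Fin k → ℝ)) : Matrix (Fin k) (Fin k) ℝ :=
  Matrix.of fun i j => ∫ x, x i j ∂ν

/-- Entrywise mean `E[(A - E[A])²]` of a matrix-valued law. -/
def matVar {k : ℕ} (ν : Measure (Fin k → Fin k → ℝ)) : Matrix (Fin k) (Fin k) ℝ :=
  Matrix.of fun i j => ∫ x, ((Matrix.of x - matMean ν) * (Matrix.of x - matMean ν)) i j ∂ν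

/-! Test each supremum in `M_n(ζ)` with the direction `Δ = t Σ Dh(Xᵢ)ᵀζ`. By (D1) the integrand
`ζᵀDh(Xᵢ + n^{-1/2}uΔ)Δ` is at least `ζᵀDh(Xᵢ)Δ - n^{-1/2}u κ₁(Xᵢ)‖ζ‖₂‖Δ‖₂²`, so integrating over
`u` and averaging over `i` gives `M_n(ζ) ≥ tA - t²C` with `C = A + n^{-1/2}‖ζ‖₂ ζᵀBζ / 2`, for every
`t`. The choice `t = A / (2C)` turns this into `A² / (4C)`. -/

section Euclidean

variable {k : ℕ}

theorem enorm2_eq_norm (v : Fin k → ℝ) :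
    enorm2 v = ‖(WithLp.toLp 2 v : EuclideanSpace ℝ (Fin k))‖ := by
  simp [enorm2, EuclideanSpace.norm_eq]

theorem enorm2_nonneg (v : Fin k → ℝ) : 0 ≤ enorm2 v := Real.sqrt_nonneg _

theorem enorm2_sq (v : Fin k → ℝ) : enorm2 v ^ 2 = v ⬝ᵥ v := by
  rw [enorm2, Real.sq_sqrt (by positivity)]
  simp [dotProduct, sq]

theorem enorm2_smul (c : ℝ) (v : Fin k → ℝ) : enorm2 (c • v) = |c| * enorm2 v := by
  simp only [enorm2_eq_norm, WithLp.toLp_smul, norm_smul, Real.norm_eq_abs]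

theorem abs_dotProduct_le_enorm2_mul (v w : Fin k → ℝ) : |v ⬝ᵥ w| ≤ enorm2 v * enorm2 w := by
  have := abs_real_inner_le_norm (WithLp.toLp 2 v : EuclideanSpace ℝ (Fin k)) (WithLp.toLp 2 w)
  simpa [enorm2_eq_norm, EuclideanSpace.inner_eq_star_dotProduct, dotProduct_comm] using this

end Euclidean

theorem sub_half_le_intervalIntegral_of_forall_sub_mul_le {F : ℝ → ℝ} (hF : Continuous F)
    {a K : ℝ} (hle : ∀ u ∈ Set.Icc (0 : ℝ) 1, a - K * u ≤ F u) :
    a - K / 2 ≤ ∫ u in (0 : ℝ)..1, F u := by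
  have hlin : ∫ u in (0 : ℝ)..1, (a - K * u) = a - K / 2 := by
    rw [intervalIntegral.integral_sub intervalIntegrable_const
      ((by fun_prop : Continuous fun u : ℝ => K * u).intervalIntegrable _ _),
      intervalIntegral.integral_const_mul, integral_id]
    norm_num
    ring
  rw [← hlin]
  exact intervalIntegral.integral_mono_on zero_le_one
    ((by fun_prop : Continuous fun u => a - K * u).intervalIntegrable _ _)
    (hF.intervalIntegrable _ _) hle

section QuadraticForms

variable {m d : ℕ}

theorem dotProduct_mul_mul_transpose_mulVec (J : Matrix (Fin d) (Fin m) ℝ)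
    (M : Matrix (Fin m) (Fin m) ℝ) (ζ : Fin d → ℝ) :
    ζ ⬝ᵥ (J * M * Jᵀ) *ᵥ ζ = (Jᵀ *ᵥ ζ) ⬝ᵥ M *ᵥ (Jᵀ *ᵥ ζ) := by
  rw [← mulVec_mulVec, ← mulVec_mulVec, dotProduct_mulVec, ← mulVec_transpose]

theorem quadForm_mul_mul_transpose_nonneg {M : Matrix (Fin m) (Fin m) ℝ} (hM : M.PosSemidef)
    (J : Matrix (Fin d) (Fin m) ℝ) (ζ : Fin d → ℝ) : 0 ≤ ζ ⬝ᵥ (J * M * Jᵀ) *ᵥ ζ := by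
  simpa using (hM.mul_mul_conjTranspose_same J).dotProduct_mulVec_nonneg ζ

theorem dotProduct_smul_sum_mulVec {ι : Type*} [Fintype ι] (c : ℝ)
    (M : ι → Matrix (Fin d) (Fin d) ℝ) (ζ : Fin d → ℝ) :
    ζ ⬝ᵥ (c • ∑ i, M i) *ᵥ ζ = c * ∑ i, ζ ⬝ᵥ M i *ᵥ ζ := by
  rw [smul_mulVec, dotProduct_smul, sum_mulVec, dotProduct_sum, smul_eq_mul]

theorem dotProduct_mulVec_smul_mulVec_transpose (J : Matrix (Fin d) (Fin m) ℝ)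
    (S : Matrix (Fin m) (Fin m) ℝ) (ζ : Fin d → ℝ) (t : ℝ) :
    ζ ⬝ᵥ J *ᵥ (t • S *ᵥ (Jᵀ *ᵥ ζ)) = t * (ζ ⬝ᵥ (J * S * Jᵀ) *ᵥ ζ) := by
  rw [dotProduct_mul_mul_transpose_mulVec, dotProduct_mulVec, ← mulVec_transpose,
    dotProduct_smul, smul_eq_mul]

theorem mahal_smul_mulVec {S : Matrix (Fin m) (Fin m) ℝ} (hS : IsUnit S.det) (t : ℝ)
    (w : Fin m → ℝ) : mahal S (t • S *ᵥ w) = t ^ 2 * (w ⬝ᵥ S *ᵥ w) := by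
  rw [mahal, mulVec_smul, mulVec_mulVec, nonsing_inv_mul S hS, one_mulVec, smul_dotProduct,
    dotProduct_smul, dotProduct_comm, smul_eq_mul, smul_eq_mul]
  ring

theorem enorm2_smul_mulVec_sq {S : Matrix (Fin m) (Fin m) ℝ} (hS : S.IsSymm) (t : ℝ)
    (w : Fin m → ℝ) : enorm2 (t • S *ᵥ w) ^ 2 = t ^ 2 * (w ⬝ᵥ (S * S) *ᵥ w) := by
  rw [enorm2_smul, mul_pow, sq_abs, enorm2_sq, ← mulVec_mulVec, dotProduct_mulVec,
    ← mulVec_transpose, hS.eq, dotProduct_comm]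

end QuadraticForms

section InnerObjective

variable {m d : ℕ} {h : (Fin m → ℝ) → Fin d → ℝ} {κ₁ : (Fin m → ℝ) → ℝ}

theorem continuous_jac (hh : ContDiff ℝ 1 h) : Continuous (jac h) :=
  continuous_matrix fun β _ =>
    (continuous_apply β).comp ((hh.continuous_fderiv one_ne_zero).clm_apply continuous_const)

theorem AssumptionD1.abs_dotProduct_jac_sub_le (hD1 : AssumptionD1 h κ₁) (x Δ v : Fin m → ℝ)
    (ζ : Fin d → ℝ) :
    |ζ ⬝ᵥ jac h (x + Δ) *ᵥ v - ζ ⬝ᵥ jac h x *ᵥ v| ≤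
      κ₁ x * enorm2 Δ * enorm2 ζ * enorm2 v := by
  rw [dotProduct_mulVec, dotProduct_mulVec, ← sub_dotProduct, ← vecMul_sub]
  exact (abs_dotProduct_le_enorm2_mul _ _).trans
    (mul_le_mul_of_nonneg_right (hD1.2.2 x Δ ζ) (enorm2_nonneg v))

theorem le_innerObj (S : Matrix (Fin m) (Fin m) ℝ) (hD1 : AssumptionD1 h κ₁) (n : ℕ)
    (x : Fin m → ℝ) (ζ : Fin d → ℝ) (Δ : Fin m → ℝ) :
    ζ ⬝ᵥ jac h x *ᵥ Δ - (Real.sqrt n)⁻¹ * κ₁ x * enorm2 ζ * enorm2 Δ ^ 2 / 2 - mahal S Δ ≤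
      innerObj S h n x ζ Δ := by
  refine sub_le_sub_right (sub_half_le_intervalIntegral_of_forall_sub_mul_le ?_ ?_) _
  · have hpath : Continuous fun u : ℝ => x + ((Real.sqrt n)⁻¹ * u) • Δ := by fun_prop
    exact continuous_const.dotProduct
      (((continuous_jac (hD1.1.of_le (by norm_num))).comp hpath).matrix_mulVec continuous_const)
  · intro u ⟨hu0, _⟩
    have hdev := abs_le.mp (hD1.abs_dotProduct_jac_sub_le x (((Real.sqrt n)⁻¹ * u) • Δ) Δ ζ)
    rw [enorm2_smul, abs_of_nonneg (by positivity)] at hdev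
    linarith [hdev.1]

theorem le_innerObj_along_jac_transpose {S : Matrix (Fin m) (Fin m) ℝ} (hS : S.PosDef)
    (hD1 : AssumptionD1 h κ₁) (n : ℕ) (x : Fin m → ℝ) (ζ : Fin d → ℝ) (t : ℝ) :
    t * (ζ ⬝ᵥ (jac h x * S * (jac h x)ᵀ) *ᵥ ζ) -
        t ^ 2 * (ζ ⬝ᵥ (jac h x * S * (jac h x)ᵀ) *ᵥ ζ +
          (Real.sqrt n)⁻¹ * κ₁ x * enorm2 ζ * (ζ ⬝ᵥ (jac h x * (S * S) * (jac h x)ᵀ) *ᵥ ζ) / 2)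
      ≤ innerObj S h n x ζ (t • S *ᵥ ((jac h x)ᵀ *ᵥ ζ)) := by
  convert le_innerObj S hD1 n x ζ (t • S *ᵥ ((jac h x)ᵀ *ᵥ ζ)) using 1
  rw [dotProduct_mulVec_smul_mulVec_transpose,
    enorm2_smul_mulVec_sq (isHermitian_iff_isSymm.mp hS.isHermitian),
    mahal_smul_mulVec hS.det_pos.ne'.isUnit, dotProduct_mul_mul_transpose_mulVec,
    dotProduct_mul_mul_transpose_mulVec (M := S * S)]
  ring

end InnerObjective

section SampleAverages

variable {m d n : ℕ} {S : Matrix (Fin m) (Fin m) ℝ} {h : (Fin m → ℝ) → Fin d → ℝ}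
  {κ₁ : (Fin m → ℝ) → ℝ}

def Bn (S : Matrix (Fin m) (Fin m) ℝ) (h : (Fin m → ℝ) → Fin d → ℝ) (κ₁ : (Fin m → ℝ) → ℝ)
    (X : Fin n → Fin m → ℝ) : Matrix (Fin d) (Fin d) ℝ :=
  (n : ℝ)⁻¹ • ∑ i, κ₁ (X i) • (jac h (X i) * (S * S) * (jac h (X i))ᵀ)

theorem quadForm_Vn (X : Fin n → Fin m → ℝ) (ζ : Fin d → ℝ) :
    ζ ⬝ᵥ Vn S h X *ᵥ ζ = (n : ℝ)⁻¹ * ∑ i, ζ ⬝ᵥ (jac h (X i) * S * (jac h (X i))ᵀ) *ᵥ ζ :=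
  dotProduct_smul_sum_mulVec _ _ ζ

theorem quadForm_Bn (X : Fin n → Fin m → ℝ) (ζ : Fin d → ℝ) :
    ζ ⬝ᵥ Bn S h κ₁ X *ᵥ ζ =
      (n : ℝ)⁻¹ * ∑ i, κ₁ (X i) * (ζ ⬝ᵥ (jac h (X i) * (S * S) * (jac h (X i))ᵀ) *ᵥ ζ) := by
  rw [Bn, dotProduct_smul_sum_mulVec]
  simp only [smul_mulVec, dotProduct_smul, smul_eq_mul]

theorem quadForm_Vn_nonneg (hS : S.PosSemidef) (X : Fin n → Fin m → ℝ) (ζ : Fin d → ℝ) :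
    0 ≤ ζ ⬝ᵥ Vn S h X *ᵥ ζ := by
  rw [quadForm_Vn]
  exact mul_nonneg (by positivity)
    (Finset.sum_nonneg fun i _ => quadForm_mul_mul_transpose_nonneg hS _ ζ)

theorem quadForm_Bn_nonneg (hS : S.IsSymm) (hκ₁ : ∀ x, 0 ≤ κ₁ x) (X : Fin n → Fin m → ℝ)
    (ζ : Fin d → ℝ) : 0 ≤ ζ ⬝ᵥ Bn S h κ₁ X *ᵥ ζ := by
  have hSS : (S * S).PosSemidef := by
    simpa [hS.eq] using posSemidef_conjTranspose_mul_self S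
  rw [quadForm_Bn]
  exact mul_nonneg (by positivity) (Finset.sum_nonneg fun i _ =>
    mul_nonneg (hκ₁ _) (quadForm_mul_mul_transpose_nonneg hSS _ ζ))

theorem ofReal_le_Mn (hS : S.PosDef) (hD1 : AssumptionD1 h κ₁) (X : Fin n → Fin m → ℝ)
    (ζ : Fin d → ℝ) (t : ℝ) :
    ENNReal.ofReal (t * (ζ ⬝ᵥ Vn S h X *ᵥ ζ) - t ^ 2 * (ζ ⬝ᵥ Vn S h X *ᵥ ζ +
        (Real.sqrt n)⁻¹ * enorm2 ζ * (ζ ⬝ᵥ Bn S h κ₁ X *ᵥ ζ) / 2)) ≤ Mn S h X ζ := by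
  rcases n.eq_zero_or_pos with rfl | hn
  · simp [Vn, Bn]
  set g : Fin n → ℝ := fun i =>
    t * (ζ ⬝ᵥ (jac h (X i) * S * (jac h (X i))ᵀ) *ᵥ ζ) -
      t ^ 2 * (ζ ⬝ᵥ (jac h (X i) * S * (jac h (X i))ᵀ) *ᵥ ζ + (Real.sqrt n)⁻¹ * κ₁ (X i) *
        enorm2 ζ * (ζ ⬝ᵥ (jac h (X i) * (S * S) * (jac h (X i))ᵀ) *ᵥ ζ) / 2)
  have hmean : t * (ζ ⬝ᵥ Vn S h X *ᵥ ζ) - t ^ 2 * (ζ ⬝ᵥ Vn S h X *ᵥ ζ +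
      (Real.sqrt n)⁻¹ * enorm2 ζ * (ζ ⬝ᵥ Bn S h κ₁ X *ᵥ ζ) / 2) = (n : ℝ)⁻¹ * ∑ i, g i := by
    rw [quadForm_Vn, quadForm_Bn]
    simp only [g, Finset.mul_sum, Finset.sum_div, mul_add, ← Finset.sum_add_distrib,
      ← Finset.sum_sub_distrib]
    exact Finset.sum_congr rfl fun i _ => by ring
  calc _ = (n : ℝ≥0∞)⁻¹ * ENNReal.ofReal (∑ i, g i) := by
        rw [hmean, ENNReal.ofReal_mul (by positivity), ENNReal.ofReal_inv_of_pos (by positivity),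
          ENNReal.ofReal_natCast]
    _ ≤ (n : ℝ≥0∞)⁻¹ * ∑ i, ENNReal.ofReal (g i) :=
        mul_le_mul_right (Finset.le_sum_of_subadditive _ ENNReal.ofReal_zero.le
          (fun _ _ => ENNReal.ofReal_add_le) _ _) _
    _ ≤ Mn S h X ζ := by
        refine mul_le_mul_right (Finset.sum_le_sum fun i _ => ?_) _
        exact le_iSup_of_le _
          (ENNReal.ofReal_le_ofReal (le_innerObj_along_jac_transpose hS hD1 n (X i) ζ t))

end SampleAverages

theorem Mn_quadratic_lower_bound_general
    (m d : ℕ)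
    (S : Matrix (Fin m) (Fin m) ℝ) (hSpd : S.PosDef)
    (h : (Fin m → ℝ) → Fin d → ℝ) (κ₁ : (Fin m → ℝ) → ℝ) (hD1 : AssumptionD1 h κ₁)
    (n : ℕ) (X : Fin n → Fin m → ℝ) (ζ : Fin d → ℝ) :
    ENNReal.ofReal ((ζ ⬝ᵥ (Vn S h X).mulVec ζ) ^ 2 /
        (4 * (ζ ⬝ᵥ (Vn S h X).mulVec ζ) +
          2 / Real.sqrt n * enorm2 ζ *
            (ζ ⬝ᵥ ((n : ℝ)⁻¹ •
              ∑ i, κ₁ (X i) • (jac h (X i) * (S * S) * (jac h (X i))ᵀ)).mulVec ζ)))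
      ≤ Mn S h X ζ := by
  change ENNReal.ofReal ((ζ ⬝ᵥ Vn S h X *ᵥ ζ) ^ 2 / (4 * (ζ ⬝ᵥ Vn S h X *ᵥ ζ) +
    2 / Real.sqrt n * enorm2 ζ * (ζ ⬝ᵥ Bn S h κ₁ X *ᵥ ζ))) ≤ Mn S h X ζ
  have hA := quadForm_Vn_nonneg (h := h) hSpd.posSemidef X ζ
  have hB := quadForm_Bn_nonneg (h := h) (isHermitian_iff_isSymm.mp hSpd.isHermitian) hD1.2.1 X ζ
  have key := ofReal_le_Mn hSpd hD1 X ζ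
  generalize ζ ⬝ᵥ Vn S h X *ᵥ ζ = A at hA key ⊢
  generalize ζ ⬝ᵥ Bn S h κ₁ X *ᵥ ζ = B at hB key ⊢
  rcases hA.eq_or_lt with rfl | hApos
  · simp
  set C := A + (Real.sqrt n)⁻¹ * enorm2 ζ * B / 2
  have hC : 0 < C := by have := enorm2_nonneg ζ; positivity
  convert key (A / (2 * C)) using 2
  rw [show 4 * A + 2 / Real.sqrt n * enorm2 ζ * B = 4 * C by simp only [C]; ring]
  field_simp
  ring

/-- Under (D1), for every `ζ ∈ ℝ^d`,
`M_n(ζ) ≥ (ζᵀAζ)² / ( 4 ζᵀAζ + (2/√n) ‖ζ‖₂ · ζᵀBζ )`, where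
`A = (1/n)Σᵢ Dh(Xᵢ)Σ Dh(Xᵢ)ᵀ` and `B = (1/n)Σᵢ κ₁(Xᵢ) Dh(Xᵢ)Σ² Dh(Xᵢ)ᵀ`
(with the convention that the right-hand side is `0` when `ζᵀAζ = 0`, matching Lean's
convention that division by zero is zero). -/
theorem Mn_quadratic_lower_bound
    (m d : ℕ) (hm : 1 ≤ m) (hd : 1 ≤ d)
    (S : Matrix (Fin m) (Fin m) ℝ) (hSsymm : S.IsSymm) (hSpd : S.PosDef)
    (h : (Fin m → ℝ) → Fin d → ℝ) (κ₁ : (Fin m → ℝ) → ℝ) (hD1 : AssumptionD1 h κ₁)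
    (n : ℕ) (hn : 1 ≤ n) (X : Fin n → Fin m → ℝ) (ζ : Fin d → ℝ) :
    ENNReal.ofReal ((ζ ⬝ᵥ (Vn S h X).mulVec ζ) ^ 2 /
        (4 * (ζ ⬝ᵥ (Vn S h X).mulVec ζ) +
          2 / Real.sqrt n * enorm2 ζ *
            (ζ ⬝ᵥ ((n : ℝ)⁻¹ •
              ∑ i, κ₁ (X i) • (jac h (X i) * (S * S) * (jac h (X i))ᵀ)).mulVec ζ)))
      ≤ Mn S h X ζ :=
  Mn_quadratic_lower_bound_general m d S hSpd h κ₁ hD1 n X ζ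

end
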